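/- (Invariance of InqML_n under n-bisimilarity) For every n ∈ ℕ, all inquisitive modal models M, M' with information states s, s', and every InqML formula φ of modal depth at most n: if M,s ~^n M',s' then M,s ⊨ φ iff M',s' ⊨ φ. -/
import Mathlib


/-- Formulas of inquisitive modal logic InqML over atomic propositions `P`. -/
inductive InqForm (P : Type) : Type
  | atom : P → InqForm P
  | bot : InqForm P
  | and : InqForm P → InqForm P → InqForm P
  | impl : InqForm P → InqForm P → InqForm P
  | idisj : InqForm P → InqForm P → InqForm P
  | box : InqForm P → InqForm P
  | boxplus : InqForm P → InqForm P

/-- An inquisitive modal model `M = ⟨W, Σ, V⟩`. -/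
structure InqModel (P : Type) where
  W : Type
  Sig : W → Set (Set W)
  Sig_nonempty : ∀ w, (Sig w).Nonempty
  Sig_downward : ∀ w, ∀ s ∈ Sig w, ∀ t ⊆ s, t ∈ Sig w
  V : P → Set W

/-- `σ(w) = ⋃ Σ(w)`. -/
def InqModel.sigma {P : Type} (M : InqModel P) (w : M.W) : Set M.W :=
  ⋃₀ M.Sig w

/-- Support of a formula at an information state `s ⊆ W`. -/
def support {P : Type} (M : InqModel P) : InqForm P → Set M.W → Prop
  | .atom p, s => s ⊆ M.V p
  | .bot, s => s = ∅
  | .and φ ψ, s => support M φ s ∧ support M ψ s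
  | .impl φ ψ, s => ∀ t ⊆ s, support M φ t → support M ψ t
  | .idisj φ ψ, s => support M φ s ∨ support M ψ s
  | .box φ, s => ∀ w ∈ s, support M φ (M.sigma w)
  | .boxplus φ, s => ∀ w ∈ s, ∀ t ∈ M.Sig w, support M φ t

/-- Truth at a world: `M,w ⊨ φ` iff `M,{w} ⊨ φ`. -/
def truth {P : Type} (M : InqModel P) (w : M.W) (φ : InqForm P) : Prop :=
  support M φ {w}

/-- Modal depth: maximal nesting depth of `□` and `⊞`. -/
def mdepth {P : Type} : InqForm P → ℕ
  | .atom _ => 0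
  | .bot => 0
  | .and φ ψ => max (mdepth φ) (mdepth ψ)
  | .impl φ ψ => max (mdepth φ) (mdepth ψ)
  | .idisj φ ψ => max (mdepth φ) (mdepth ψ)
  | .box φ => mdepth φ + 1
  | .boxplus φ => mdepth φ + 1

/-- Lift of a relation between worlds to sets of worlds: every world on either
side is related to some world on the other side. -/
def StateRel {W W' : Type} (Z : W → W' → Prop) (s : Set W) (s' : Set W') : Prop :=
  (∀ w ∈ s, ∃ w' ∈ s', Z w w') ∧ (∀ w' ∈ s', ∃ w ∈ s, Z w w')

/-- `n`-bisimilarity between worlds of two inquisitive modal models. -/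
def NBisimW {P : Type} (M M' : InqModel P) : ℕ → M.W → M'.W → Prop
  | 0, w, w' => ∀ p : P, w ∈ M.V p ↔ w' ∈ M'.V p
  | n + 1, w, w' => (∀ p : P, w ∈ M.V p ↔ w' ∈ M'.V p) ∧
      (∀ s ∈ M.Sig w, ∃ s' ∈ M'.Sig w', StateRel (NBisimW M M' n) s s') ∧
      (∀ s' ∈ M'.Sig w', ∃ s ∈ M.Sig w, StateRel (NBisimW M M' n) s s')

/-- `n`-bisimilarity between information states. -/
def NBisimS {P : Type} (M M' : InqModel P) (n : ℕ) (s : Set M.W) (s' : Set M'.W) : Prop :=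
  StateRel (NBisimW M M' n) s s'

/-- `Z` is a bisimulation between two inquisitive modal models. -/
def IsBisimulation {P : Type} (M M' : InqModel P) (Z : M.W → M'.W → Prop) : Prop :=
  ∀ w w', Z w w' →
    (∀ p : P, w ∈ M.V p ↔ w' ∈ M'.V p) ∧
    (∀ s ∈ M.Sig w, ∃ s' ∈ M'.Sig w', StateRel Z s s') ∧
    (∀ s' ∈ M'.Sig w', ∃ s ∈ M.Sig w, StateRel Z s s')

/-- Bisimilarity of worlds: inclusion in some bisimulation. -/
def BisimW {P : Type} (M M' : InqModel P) (w : M.W) (w' : M'.W) : Prop :=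
  ∃ Z, IsBisimulation M M' Z ∧ Z w w'

/-- Bisimilarity of information states. -/
def BisimS {P : Type} (M M' : InqModel P) (s : Set M.W) (s' : Set M'.W) : Prop :=
  StateRel (BisimW M M') s s'

lemma stateRel_mono {W W' : Type} {Z Z' : W → W' → Prop} (h : ∀ a b, Z a b → Z' a b)
    {s : Set W} {s' : Set W'} (hr : StateRel Z s s') : StateRel Z' s s' := by
  obtain ⟨h1, h2⟩ := hr
  refine ⟨fun w hw => ?_, fun w' hw' => ?_⟩
  · obtain ⟨w', hw', hz⟩ := h1 w hw; exact ⟨w', hw', h _ _ hz⟩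
  · obtain ⟨w, hw, hz⟩ := h2 w' hw'; exact ⟨w, hw, h _ _ hz⟩

lemma nbisim_step {P : Type} (M M' : InqModel P) :
    ∀ n (w : M.W) (w' : M'.W), NBisimW M M' (n + 1) w w' → NBisimW M M' n w w' := by
  intro n
  induction n with
  | zero => intro w w' h; exact h.1
  | succ n ih =>
    rintro w w' ⟨ha, h1, h2⟩
    refine ⟨ha, fun s hs => ?_, fun s' hs' => ?_⟩
    · obtain ⟨s', hs', hr⟩ := h1 s hs
      exact ⟨s', hs', stateRel_mono (fun a b => ih a b) hr⟩
    · obtain ⟨s, hs, hr⟩ := h2 s' hs'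
      exact ⟨s, hs, stateRel_mono (fun a b => ih a b) hr⟩

lemma nbisim_mono {P : Type} (M M' : InqModel P) {m n : ℕ} (hmn : m ≤ n) :
    ∀ (w : M.W) (w' : M'.W), NBisimW M M' n w w' → NBisimW M M' m w w' := by
  induction n with
  | zero => obtain rfl := Nat.le_zero.mp hmn; exact fun w w' h => h
  | succ n ih =>
    intro w w' h
    rcases Nat.lt_or_ge m (n + 1) with hlt | hge
    · exact ih (Nat.lt_succ_iff.mp hlt) w w' (nbisim_step M M' n w w' h)
    · have : m = n + 1 := le_antisymm hmn hge
      subst this; exact h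

lemma nbisim_atoms {P : Type} {M M' : InqModel P} {n : ℕ} {w : M.W} {w' : M'.W}
    (h : NBisimW M M' n w w') : ∀ p, w ∈ M.V p ↔ w' ∈ M'.V p := by
  cases n with
  | zero => exact h
  | succ n => exact h.1

lemma nbisim_sigma {P : Type} {M M' : InqModel P} {n : ℕ} {w : M.W} {w' : M'.W}
    (h : NBisimW M M' (n + 1) w w') : NBisimS M M' n (M.sigma w) (M'.sigma w') := by
  obtain ⟨_, h1, h2⟩ := h
  constructor
  · rintro u ⟨t, ht, hu⟩
    obtain ⟨t', ht', hr1, hr2⟩ := h1 t ht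
    obtain ⟨u', hu', hz⟩ := hr1 u hu
    exact ⟨u', ⟨t', ht', hu'⟩, hz⟩
  · rintro u' ⟨t', ht', hu'⟩
    obtain ⟨t, ht, hr1, hr2⟩ := h2 t' ht'
    obtain ⟨u, hu, hz⟩ := hr2 u' hu'
    exact ⟨u, ⟨t, ht, hu⟩, hz⟩

/-- **Invariance of `InqML_n` under `n`-bisimilarity**. -/
theorem invariance_under_nbisim {P : Type} (n : ℕ) (M M' : InqModel P)
    (s : Set M.W) (s' : Set M'.W) (φ : InqForm P) (hd : mdepth φ ≤ n)
    (h : NBisimS M M' n s s') :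
    support M φ s ↔ support M' φ s' := by
  induction φ generalizing n s s' with
  | atom p =>
    obtain ⟨h1, h2⟩ := h
    constructor
    · intro hs w' hw'
      obtain ⟨w, hw, hz⟩ := h2 w' hw'
      exact (nbisim_atoms hz p).mp (hs hw)
    · intro hs w hw
      obtain ⟨w', hw', hz⟩ := h1 w hw
      exact (nbisim_atoms hz p).mpr (hs hw')
  | bot =>
    obtain ⟨h1, h2⟩ := h
    simp only [support, Set.eq_empty_iff_forall_notMem]
    constructor
    · intro hs w' hw'
      obtain ⟨w, hw, _⟩ := h2 w' hw'
      exact hs w hw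
    · intro hs w hw
      obtain ⟨w', hw', _⟩ := h1 w hw
      exact hs w' hw'
  | and φ ψ ihφ ihψ =>
    simp only [mdepth, max_le_iff] at hd
    exact and_congr (ihφ n _ _ hd.1 h) (ihψ n _ _ hd.2 h)
  | idisj φ ψ ihφ ihψ =>
    simp only [mdepth, max_le_iff] at hd
    exact or_congr (ihφ n _ _ hd.1 h) (ihψ n _ _ hd.2 h)
  | impl φ ψ ihφ ihψ =>
    simp only [mdepth, max_le_iff] at hd
    constructor
    · intro hs t' ht' hφ'
      set t : Set M.W := {w ∈ s | ∃ w' ∈ t', NBisimW M M' n w w'} with htdef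
      have hts : t ⊆ s := fun w hw => hw.1
      have hrel : NBisimS M M' n t t' := by
        constructor
        · rintro w ⟨_, w', hw', hz⟩; exact ⟨w', hw', hz⟩
        · intro w' hw'
          obtain ⟨w, hw, hz⟩ := h.2 w' (ht' hw')
          exact ⟨w, ⟨hw, w', hw', hz⟩, hz⟩
      exact (ihψ n _ _ hd.2 hrel).mp (hs t hts ((ihφ n _ _ hd.1 hrel).mpr hφ'))
    · intro hs t ht hφ
      set t' : Set M'.W := {w' ∈ s' | ∃ w ∈ t, NBisimW M M' n w w'} with htdef
      have hts : t' ⊆ s' := fun w' hw' => hw'.1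
      have hrel : NBisimS M M' n t t' := by
        constructor
        · intro w hw
          obtain ⟨w', hw', hz⟩ := h.1 w (ht hw)
          exact ⟨w', ⟨hw', w, hw, hz⟩, hz⟩
        · rintro w' ⟨_, w, hw, hz⟩; exact ⟨w, hw, hz⟩
      exact (ihψ n _ _ hd.2 hrel).mpr (hs t' hts ((ihφ n _ _ hd.1 hrel).mp hφ))
  | box φ ih =>
    simp only [mdepth] at hd
    obtain ⟨k, rfl⟩ : ∃ k, n = k + 1 := ⟨n - 1, by omega⟩
    have hdk : mdepth φ ≤ k := Nat.succ_le_succ_iff.mp hd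
    constructor
    · intro hs w' hw'
      obtain ⟨w, hw, hz⟩ := h.2 w' hw'
      exact (ih k _ _ hdk (nbisim_sigma hz)).mp (hs w hw)
    · intro hs w hw
      obtain ⟨w', hw', hz⟩ := h.1 w hw
      exact (ih k _ _ hdk (nbisim_sigma hz)).mpr (hs w' hw')
  | boxplus φ ih =>
    simp only [mdepth] at hd
    obtain ⟨k, rfl⟩ : ∃ k, n = k + 1 := ⟨n - 1, by omega⟩
    have hdk : mdepth φ ≤ k := Nat.succ_le_succ_iff.mp hd
    constructor
    · intro hs w' hw' t' ht'
      obtain ⟨w, hw, hz⟩ := h.2 w' hw'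
      obtain ⟨t, ht, hr⟩ := hz.2.2 t' ht'
      exact (ih k _ _ hdk hr).mp (hs w hw t ht)
    · intro hs w hw t ht
      obtain ⟨w', hw', hz⟩ := h.1 w hw
      obtain ⟨t', ht', hr⟩ := hz.2.1 t ht
      exact (ih k _ _ hdk hr).mpr (hs w' hw' t' ht')
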